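/- For real numbers $e_l > 0$, $f > 0$, $m \in (0,1)$, $b_a \ge 0$, $b_l \ge 0$ with $b_l + b_a \le 1$ and $b_v = 1 - b_l - b_a$, the inequality $\frac{e_l}{f} b_l > m\left(\frac{e_l}{f} b_l + e_l b_a + e_l b_v\right)$ holds if and only if $b_l > \frac{mf}{1 - m + mf}$. -/
import Mathlib

theorem vote_omission_condition
    (e_l f m b_a b_l b_v : ℝ)
    (he : 0 < e_l) (hf : 0 < f) (hm0 : 0 < m) (hm1 : m < 1)
    (hba : 0 ≤ b_a) (hbl : 0 ≤ b_l) (hsum : b_l + b_a ≤ 1)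
    (hbv : b_v = 1 - b_l - b_a) :
    e_l / f * b_l > m * (e_l / f * b_l + e_l * b_a + e_l * b_v) ↔
      b_l > m * f / (1 - m + m * f) := by
  subst hbv
  have hd : 0 < 1 - m + m * f := by nlinarith
  have h2 : m * (e_l / f * b_l + e_l * b_a + e_l * (1 - b_l - b_a))
      = e_l / f * (m * (b_l + f * (1 - b_l))) := by
    field_simp; ring
  rw [gt_iff_lt, gt_iff_lt, div_lt_iff₀ hd, h2,
    mul_lt_mul_iff_right₀ (by positivity : (0:ℝ) < e_l / f)]
  constructor <;> intro h <;> nlinarith
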